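/- Fix k ∈ {1,…,c}, V ∈ {−1,+1}^{n×c}, S ∈ {0,1}^{n×n}, and the columns of U other than column k, and view L as a function of the real vector u = U_{*k} ∈ ℝ^n. Then for all u, u₀ ∈ ℝ^n, L(u) ≥ L(u₀) + ⟨g(u₀), u − u₀⟩ − (nλ²/(8c²))·‖u − u₀‖², where g(u₀)_i = (λ/c)·Σ_{j=1}^n (S_{ij} − A_{ij}(u₀))·V_{jk} is the gradient of L at u₀ and ‖·‖ is the Euclidean norm. That is, the quadratic surrogate L̃ built at u₀ with curvature matrix H = −(nλ²/(4c²))·I globally lower-bounds L and coincides with L at u₀. -/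

import Mathlib

open scoped BigOperators RealInnerProductSpace

/-- The logistic (sigmoid) function. -/
noncomputable def logistic (t : ℝ) : ℝ := 1 / (1 + Real.exp (-t))

/-!
The softplus function `log (1 + exp t)` has derivative `σ t` and second derivative
`σ t (1 - σ t) ≤ 1/4`, so it lies below its tangent parabola with curvature `1/4`. Each `Θ_{ij}` is
affine in `u_i` with slope `(λ/c) V_{jk}`, and `V_{jk}² = 1`, so every term of `L` is minorized by a
parabola in `u_i` of curvature `λ²/(4c²)`; summing over `j` gives `nλ²/(4c²)` per coordinate.
-/

open Real

lemma logistic_eq_sigmoid : logistic = sigmoid := by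
  funext t
  rw [logistic, sigmoid_def, one_div]

lemma sigmoid_mul_one_sub_le (x : ℝ) : sigmoid x * (1 - sigmoid x) ≤ 1 / 4 := by
  nlinarith [sq_nonneg (sigmoid x - 1 / 2)]

lemma hasDerivAt_log_one_add_exp (x : ℝ) :
    HasDerivAt (fun t => log (1 + exp t)) (sigmoid x) x := by
  convert ((hasDerivAt_exp x).const_add 1).log (by positivity) using 1
  rw [sigmoid_def, exp_neg]
  field_simp
  ring

lemma monotone_div_four_sub_sigmoid : Monotone fun x => x / 4 - sigmoid x := by
  refine monotone_of_deriv_nonneg (by fun_prop) fun x => ?_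
  have h : HasDerivAt (fun x => x / 4 - sigmoid x) (1 / 4 - sigmoid x * (1 - sigmoid x)) x :=
    ((hasDerivAt_id' x).div_const 4).sub (hasDerivAt_sigmoid x)
  rw [h.deriv]
  linarith [sigmoid_mul_one_sub_le x]

/-- Monotonicity of `M x - f' x` is the bound `f'' ≤ M` without assuming `f'` differentiable. -/
theorem le_add_deriv_mul_sub_add_sq_of_monotone {f f' : ℝ → ℝ} {M : ℝ}
    (hf : ∀ x, HasDerivAt f (f' x) x) (hf' : Monotone fun x => M * x - f' x) (x₀ x : ℝ) :
    f x ≤ f x₀ + f' x₀ * (x - x₀) + M / 2 * (x - x₀) ^ 2 := by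
  set ψ : ℝ → ℝ := fun y => f x₀ + f' x₀ * (y - x₀) + M / 2 * (y - x₀) ^ 2 - f y
  have hψ : ∀ y, HasDerivAt ψ (M * y - f' y - (M * x₀ - f' x₀)) y := fun y => by
    have hlin : HasDerivAt (fun y => y - x₀) 1 y := (hasDerivAt_id' y).sub_const x₀
    refine ((((hlin.const_mul (f' x₀)).const_add (f x₀)).add
      ((hlin.pow 2).const_mul (M / 2))).sub (hf y)).congr_deriv ?_
    norm_num
    ring
  have hconvex : ConvexOn ℝ Set.univ ψ := by
    refine Monotone.convexOn_univ_of_deriv (fun y => (hψ y).differentiableAt) ?_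
    rw [funext fun y => (hψ y).deriv]
    exact fun a b hab => sub_le_sub_right (hf' hab) _
  have hmin : IsMinOn ψ Set.univ x₀ := by
    refine hconvex.isMinOn_of_rightDeriv_eq_zero (by simp) ?_
    rw [(hψ x₀).hasDerivWithinAt.derivWithin (uniqueDiffWithinAt_Ioi x₀), sub_self]
  have := hmin (Set.mem_univ x)
  simp only [ψ, Set.mem_ofPred_eq, sub_self, mul_zero, add_zero, ne_eq, OfNat.ofNat_ne_zero,
    not_false_eq_true, zero_pow] at this
  linarith

theorem log_one_add_exp_le (t₀ t : ℝ) :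
    log (1 + exp t) ≤ log (1 + exp t₀) + sigmoid t₀ * (t - t₀) + (t - t₀) ^ 2 / 8 := by
  have := le_add_deriv_mul_sub_add_sq_of_monotone hasDerivAt_log_one_add_exp (M := 1 / 4)
    (by simpa only [one_div_mul_eq_div] using monotone_div_four_sub_sigmoid) t₀ t
  linarith

theorem mul_sub_log_one_add_exp_ge (s t₀ t : ℝ) :
    s * t₀ - log (1 + exp t₀) + (s - sigmoid t₀) * (t - t₀) - (t - t₀) ^ 2 / 8 ≤
      s * t - log (1 + exp t) := by
  linarith [log_one_add_exp_le t₀ t]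

theorem dlfh_minorization_column_U_general (n c : ℕ)
    (lam : ℝ) (k : Fin c)
    (U V : Fin n → Fin c → ℝ)
    (hV : ∀ j k', V j k' = 1 ∨ V j k' = -1)
    (S : Fin n → Fin n → ℝ)
    (Θ : (Fin n → ℝ) → Fin n → Fin n → ℝ)
    (hΘ : ∀ u i j, Θ u i j =
      (lam / c) * (u i * V j k + ∑ k' ∈ Finset.univ.erase k, U i k' * V j k'))
    (L : EuclideanSpace ℝ (Fin n) → ℝ)
    (hL : ∀ u, L u = ∑ i : Fin n, ∑ j : Fin n,
      (S i j * Θ u i j - Real.log (1 + Real.exp (Θ u i j))))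
    (g : EuclideanSpace ℝ (Fin n) → EuclideanSpace ℝ (Fin n))
    (hg : ∀ w i, g w i = (lam / c) * ∑ j : Fin n, (S i j - logistic (Θ w i j)) * V j k) :
    ∀ u u₀ : EuclideanSpace ℝ (Fin n),
      L u₀ + ⟪g u₀, u - u₀⟫ - (n * lam ^ 2 / (8 * c ^ 2)) * ‖u - u₀‖ ^ 2 ≤ L u := by
  intro u u₀
  have hterm : ∀ i j, S i j * Θ u₀ i j - log (1 + exp (Θ u₀ i j))
      + lam / c * ((S i j - logistic (Θ u₀ i j)) * V j k) * (u i - u₀ i)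
      - lam ^ 2 / (8 * c ^ 2) * (u i - u₀ i) ^ 2 ≤ S i j * Θ u i j - log (1 + exp (Θ u i j)) := by
    intro i j
    have hV_sq : V j k ^ 2 = 1 := by rcases hV j k with h | h <;> simp [h]
    have hΘ_sub : Θ u i j - Θ u₀ i j = lam / c * V j k * (u i - u₀ i) := by
      rw [hΘ, hΘ]; ring
    have := mul_sub_log_one_add_exp_ge (S i j) (Θ u₀ i j) (Θ u i j)
    rw [hΘ_sub, ← logistic_eq_sigmoid] at this
    linear_combination this + (lam / c) ^ 2 * (u i - u₀ i) ^ 2 / 8 * hV_sq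
  have hinner : ⟪g u₀, u - u₀⟫ = ∑ i, ∑ j,
      lam / c * ((S i j - logistic (Θ u₀ i j)) * V j k) * (u i - u₀ i) := by
    simp only [PiLp.inner_apply, Real.inner_apply, PiLp.sub_apply, hg, Finset.mul_sum,
      Finset.sum_mul]
  have hnorm : n * lam ^ 2 / (8 * c ^ 2) * ‖u - u₀‖ ^ 2 = ∑ i, ∑ _j : Fin n,
      lam ^ 2 / (8 * c ^ 2) * (u i - u₀ i) ^ 2 := by
    simp only [EuclideanSpace.real_norm_sq_eq, PiLp.sub_apply, Finset.sum_const,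
      Finset.card_univ, Fintype.card_fin, nsmul_eq_mul, Finset.mul_sum]
    ring_nf
  calc L u₀ + ⟪g u₀, u - u₀⟫ - n * lam ^ 2 / (8 * c ^ 2) * ‖u - u₀‖ ^ 2
      = ∑ i, ∑ j, (S i j * Θ u₀ i j - log (1 + exp (Θ u₀ i j))
          + lam / c * ((S i j - logistic (Θ u₀ i j)) * V j k) * (u i - u₀ i)
          - lam ^ 2 / (8 * c ^ 2) * (u i - u₀ i) ^ 2) := by
        simp only [hL, hinner, hnorm, Finset.sum_add_distrib, Finset.sum_sub_distrib]
    _ ≤ ∑ i, ∑ j, (S i j * Θ u i j - log (1 + exp (Θ u i j))) :=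
      Finset.sum_le_sum fun i _ => Finset.sum_le_sum fun j _ => hterm i j
    _ = L u := (hL u).symm

/-- Quadratic minorization of the DLFH objective in one column `u = U_{*k}` of `U`:
`L(u) ≥ L(u₀) + ⟨g(u₀), u − u₀⟩ − (nλ²/(8c²))·‖u − u₀‖²` for all `u, u₀ ∈ ℝ^n`. -/
theorem dlfh_minorization_column_U (n c : ℕ) (hn : 1 ≤ n) (hc : 1 ≤ c)
    (lam : ℝ) (hlam : 0 < lam) (k : Fin c)
    (U V : Fin n → Fin c → ℝ)
    (hU : ∀ i k', U i k' = 1 ∨ U i k' = -1)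
    (hV : ∀ j k', V j k' = 1 ∨ V j k' = -1)
    (S : Fin n → Fin n → ℝ)
    (hS : ∀ i j, S i j = 0 ∨ S i j = 1)
    (Θ : (Fin n → ℝ) → Fin n → Fin n → ℝ)
    (hΘ : ∀ u i j, Θ u i j =
      (lam / c) * (u i * V j k + ∑ k' ∈ Finset.univ.erase k, U i k' * V j k'))
    (L : EuclideanSpace ℝ (Fin n) → ℝ)
    (hL : ∀ u, L u = ∑ i : Fin n, ∑ j : Fin n,
      (S i j * Θ u i j - Real.log (1 + Real.exp (Θ u i j))))
    (g : EuclideanSpace ℝ (Fin n) → EuclideanSpace ℝ (Fin n))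
    (hg : ∀ w i, g w i = (lam / c) * ∑ j : Fin n, (S i j - logistic (Θ w i j)) * V j k) :
    ∀ u u₀ : EuclideanSpace ℝ (Fin n),
      L u₀ + ⟪g u₀, u - u₀⟫ - (n * lam ^ 2 / (8 * c ^ 2)) * ‖u - u₀‖ ^ 2 ≤ L u :=
  dlfh_minorization_column_U_general n c lam k U V hV S Θ hΘ L hL g hg
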